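/- arXiv:1110.1557 — 5 statements merged into one kernel-verified Lean document; each statement's English description precedes it below -/
import Mathlib

section
/- Let A be a ring with identity and let Δ : A → A be an additive map such that for every x ∈ A there exists an additive map D : A → A (depending on x) satisfying D(uv) = D(u)v + uD(v) for all u, v ∈ A and Δ(x) = D(x). Then for every central idempotent z ∈ A (z² = z and zx = xz for all x) and every x ∈ A one has Δ(z · x) = z · Δ(x). -/
/-- Auxiliary: for a local derivation `Δ` and a central idempotent `p`,
`Δ(p x) = p Δ(p x)`. -/
lemma stmt_3_aux
    {A : Type*} [Ring A]
    (Δ : A → A)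
    (hloc : ∀ x : A, ∃ D : A → A,
      (∀ u v : A, D (u + v) = D u + D v) ∧
      (∀ u v : A, D (u * v) = D u * v + u * D v) ∧
      Δ x = D x)
    (p : A) (hp : p * p = p) (hc : ∀ a : A, p * a = a * p) (x : A) :
    Δ (p * x) = p * Δ (p * x) := by
  obtain ⟨D, -, hDmul, hDeq⟩ := hloc (p * x)
  have h1 : p * x * p = p * x := by
    rw [mul_assoc, ← hc x, ← mul_assoc, hp]
  have he : Δ (p * x) = Δ (p * x) * p + p * x * D p := by
    rw [hDeq]
    nth_rewrite 1 [← h1]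
    rw [hDmul, ← hDeq]
  have h2 : p * Δ (p * x) = p * Δ (p * x) + p * x * D p := by
    nth_rewrite 1 [he]
    rw [mul_add, ← mul_assoc, ← mul_assoc, ← mul_assoc, hp, mul_assoc p (Δ (p*x)) p,
      ← hc (Δ (p * x)), ← mul_assoc, hp]
  have ht : p * x * D p = 0 := by
    have := h2
    nth_rewrite 1 [← add_zero (p * Δ (p * x))] at this
    exact (add_left_cancel this).symm
  rw [he, ht, add_zero, ← hc (Δ (p * x)), ← mul_assoc, hp]

/-- Lemma 2.3 (ring-theoretic form): an additive local derivation `Δ` on a unital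
ring is homogeneous with respect to central idempotents: `Δ(z x) = z Δ(x)`. -/
theorem stmt_3
    {A : Type*} [Ring A]
    (Δ : A → A)
    (haddΔ : ∀ x y : A, Δ (x + y) = Δ x + Δ y)
    (hloc : ∀ x : A, ∃ D : A → A,
      (∀ u v : A, D (u + v) = D u + D v) ∧
      (∀ u v : A, D (u * v) = D u * v + u * D v) ∧
      Δ x = D x)
    (z : A) (hidem : z * z = z) (hcentral : ∀ x : A, z * x = x * z) (x : A) :
    Δ (z * x) = z * Δ x := by
  set w : A := 1 - z with hw
  have hww : w * w = w := by rw [hw, one_sub_mul, mul_one_sub, hidem]; abel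
  have hwc : ∀ a : A, w * a = a * w := by
    intro a; rw [hw, sub_mul, mul_sub, one_mul, mul_one, hcentral]
  have hzw : z * w = 0 := by rw [hw, mul_sub, mul_one, hidem, sub_self]
  have hx : z * x + w * x = x := by rw [hw]; noncomm_ring
  have h1 : Δ (z * x) = z * Δ (z * x) :=
    stmt_3_aux Δ hloc z hidem hcentral x
  have h2 : Δ (w * x) = w * Δ (w * x) :=
    stmt_3_aux Δ hloc w hww hwc x
  have h3 : z * Δ (w * x) = 0 := by
    rw [h2, ← mul_assoc, hzw, zero_mul]
  calc Δ (z * x) = z * Δ (z * x) := h1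
    _ = z * Δ (z * x) + z * Δ (w * x) := by rw [h3, add_zero]
    _ = z * (Δ (z * x) + Δ (w * x)) := by rw [mul_add]
    _ = z * Δ (z * x + w * x) := by rw [haddΔ]
    _ = z * Δ x := by rw [hx]
end

section
/- Let A be an associative complex algebra and let τ : A → ℂ be a linear functional which is tracial, i.e. τ(xy) = τ(yx) for all x, y ∈ A. Let Δ : A → A be a map such that for every pair x, y ∈ A there exists an element a ∈ A (depending on x, y) with Δ(x) = a·x − x·a and Δ(y) = a·y − y·a. Then τ(Δ(x)·y + x·Δ(y)) = 0 for all x, y ∈ A. -/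
/-- Trace identity from the proof of Theorem 3.2: if `Δ` is a 2-local inner
derivation on a complex algebra with a tracial linear functional `τ`, then
`τ(Δ(x) y + x Δ(y)) = 0`. -/
theorem stmt_7
    {A : Type*} [Ring A] [Algebra ℂ A]
    (τ : A →ₗ[ℂ] ℂ)
    (htr : ∀ x y : A, τ (x * y) = τ (y * x))
    (Δ : A → A)
    (h2loc : ∀ x y : A, ∃ a : A,
      Δ x = a * x - x * a ∧ Δ y = a * y - y * a)
    (x y : A) :
    τ (Δ x * y + x * Δ y) = 0 := by
  obtain ⟨a, hx, hy⟩ := h2loc x y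
  have : Δ x * y + x * Δ y = a * (x * y) - (x * y) * a := by
    rw [hx, hy]; noncomm_ring
  rw [this, map_sub, htr, sub_self]
end

section
/- Let A be an associative complex *-algebra and let τ : A → ℂ be a linear functional which is tracial (τ(xy) = τ(yx) for all x, y) and faithful in the sense that τ(x* x) = 0 implies x = 0. Let Δ : A → A be a map such that for every pair x, y ∈ A there exists an element a ∈ A (depending on x, y) with Δ(x) = a·x − x·a and Δ(y) = a·y − y·a. Then Δ is additive: Δ(u + v) = Δ(u) + Δ(v) for all u, v ∈ A. -/
/-- Additivity step in the proof of Theorem 3.2: a 2-local inner derivation on a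
complex *-algebra with a faithful tracial linear functional is additive. -/
theorem stmt_8
    {A : Type*} [Ring A] [Algebra ℂ A] [StarRing A] [StarModule ℂ A]
    (τ : A →ₗ[ℂ] ℂ)
    (htr : ∀ x y : A, τ (x * y) = τ (y * x))
    (hfaithful : ∀ x : A, τ (star x * x) = 0 → x = 0)
    (Δ : A → A)
    (h2loc : ∀ x y : A, ∃ a : A,
      Δ x = a * x - x * a ∧ Δ y = a * y - y * a)
    (u v : A) :
    Δ (u + v) = Δ u + Δ v := by
  have key : ∀ x y : A, τ (Δ x * y) = - τ (x * Δ y) := by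
    intro x y
    obtain ⟨a, hx, hy⟩ := h2loc x y
    rw [hx, hy]
    have h1 : τ ((a * x - x * a) * y) = τ (a * x * y) - τ (x * a * y) := by
      rw [sub_mul, map_sub]
    have h2 : τ (x * (a * y - y * a)) = τ (x * (a * y)) - τ (x * (y * a)) := by
      rw [mul_sub, map_sub]
    rw [h1, h2]
    have e1 : τ (x * a * y) = τ (x * (a * y)) := by rw [mul_assoc]
    have e2 : τ (a * x * y) = τ (x * (y * a)) := by
      rw [htr (a * x) y, htr x (y * a), mul_assoc]
    rw [e1, e2]; ring
  set D := Δ (u + v) - Δ u - Δ v with hD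
  have hzero : ∀ z : A, τ (D * z) = 0 := by
    intro z
    have : τ (D * z) = τ (Δ (u + v) * z) - τ (Δ u * z) - τ (Δ v * z) := by
      rw [hD, sub_mul, sub_mul, map_sub, map_sub]
    rw [this, key (u + v) z, key u z, key v z]
    have : (u + v) * Δ z = u * Δ z + v * Δ z := add_mul u v (Δ z)
    rw [this, map_add]; ring
  have hDz : D = 0 := by
    apply hfaithful
    rw [htr]
    exact hzero (star D)
  have h : Δ (u + v) - (Δ u + Δ v) = 0 := by rw [← sub_sub]; exact hDz
  exact sub_eq_zero.mp h
end

section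
/- Let A be an associative complex *-algebra and let τ : A → ℂ be a linear functional which is tracial (τ(xy) = τ(yx) for all x, y) and faithful in the sense that τ(x* x) = 0 implies x = 0. Let Δ : A → A be a map such that for every pair x, y ∈ A there exists an element a ∈ A (depending on x, y) with Δ(x) = a·x − x·a and Δ(y) = a·y − y·a. Then Δ is a ℂ-linear derivation: Δ is ℂ-linear and Δ(xy) = Δ(x)y + xΔ(y) for all x, y ∈ A. -/
private def dd {A : Type*} [Ring A] (Δ : A → A) (x y : A) : A :=
  Δ (x * y) - (Δ x * y + x * Δ y)

private def cc {A : Type*} [Ring A] (x y : A) : A := x * y - y * x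

/-- Algebraic core of Theorems 3.2 and 3.4: a 2-local inner derivation on a
complex *-algebra with a faithful tracial linear functional is a ℂ-linear
derivation. -/
theorem stmt_9
    {A : Type*} [Ring A] [Algebra ℂ A] [StarRing A] [StarModule ℂ A]
    (τ : A →ₗ[ℂ] ℂ)
    (htr : ∀ x y : A, τ (x * y) = τ (y * x))
    (hfaithful : ∀ x : A, τ (star x * x) = 0 → x = 0)
    (Δ : A → A)
    (h2loc : ∀ x y : A, ∃ a : A,
      Δ x = a * x - x * a ∧ Δ y = a * y - y * a) :
    (∀ u v : A, Δ (u + v) = Δ u + Δ v) ∧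
    (∀ (c : ℂ) (x : A), Δ (c • x) = c • Δ x) ∧
    (∀ x y : A, Δ (x * y) = Δ x * y + x * Δ y) := by
  -- torsion-freeness helpers
  have half_cancel : ∀ a b : A, a + a = b + b → a = b := by
    intro a b h
    have h2 : (2:ℂ) • a = (2:ℂ) • b := by rw [two_smul, two_smul]; exact h
    calc a = ((2:ℂ)⁻¹ * 2) • a := by norm_num
      _ = (2:ℂ)⁻¹ • ((2:ℂ) • a) := mul_smul _ _ a
      _ = (2:ℂ)⁻¹ • ((2:ℂ) • b) := by rw [h2]
      _ = ((2:ℂ)⁻¹ * 2) • b := (mul_smul _ _ b).symm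
      _ = b := by norm_num
  have tt0 : ∀ t : A, t + t = 0 → t = 0 := by
    intro t h
    have := half_cancel t 0 (by simpa using h)
    simpa using this
  -- nondegeneracy of the trace pairing
  have nondeg : ∀ w : A, (∀ z : A, τ (w * z) = 0) → w = 0 := by
    intro w hw
    have h1 : τ (star (star w) * star w) = 0 := by
      rw [star_star]; exact hw (star w)
    have := hfaithful (star w) h1
    simpa [star_eq_zero] using this
  -- semiprimeness
  have semiprime : ∀ s : A, (∀ w : A, s * w * s = 0) → s = 0 := by
    intro s hs
    have h1 : s * star s * s = 0 := hs (star s)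
    have hbb : (s * star s) * (s * star s) = 0 := by
      calc (s * star s) * (s * star s) = (s * star s * s) * star s := by noncomm_ring
        _ = 0 := by rw [h1, zero_mul]
    have hbstar : star (s * star s) = s * star s := by rw [star_mul, star_star]
    have hb0 : s * star s = 0 := by
      apply hfaithful
      rw [hbstar, hbb, map_zero]
    apply hfaithful
    rw [htr (star s) s, hb0, map_zero]
  -- key trace identity
  have keyτ : ∀ p q : A, τ (Δ p * q) + τ (p * Δ q) = 0 := by
    intro p q
    obtain ⟨a, hp, hq⟩ := h2loc p q
    rw [hp, hq]
    have e1 : (a*p - p*a) * q = a*(p*q) - p*(a*q) := by noncomm_ring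
    have e2 : p * (a*q - q*a) = p*(a*q) - (p*q)*a := by noncomm_ring
    rw [e1, e2, map_sub, map_sub, htr a (p*q)]
    ring
  have keyτ' : ∀ p q : A, τ (Δ p * q) = -τ (p * Δ q) :=
    fun p q => eq_neg_of_add_eq_zero_left (keyτ p q)
  -- additivity
  have hadd : ∀ u v : A, Δ (u + v) = Δ u + Δ v := by
    intro u v
    have h0 : ∀ z : A, τ ((Δ (u + v) - (Δ u + Δ v)) * z) = 0 := by
      intro z
      have e : (Δ (u+v) - (Δ u + Δ v)) * z = Δ (u+v) * z - (Δ u * z + Δ v * z) := by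
        noncomm_ring
      rw [e, map_sub, map_add, keyτ' (u+v) z, keyτ' u z, keyτ' v z,
        show (u + v) * Δ z = u * Δ z + v * Δ z from add_mul u v (Δ z), map_add]
      ring
    exact sub_eq_zero.mp (nondeg _ h0)
  -- homogeneity
  have hsmul : ∀ (c : ℂ) (x : A), Δ (c • x) = c • Δ x := by
    intro c x
    have h0 : ∀ z : A, τ ((Δ (c • x) - c • Δ x) * z) = 0 := by
      intro z
      rw [sub_mul, map_sub, keyτ' (c • x) z, smul_mul_assoc, map_smul,
        smul_mul_assoc, map_smul, smul_eq_mul, smul_eq_mul, keyτ' x z]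
      ring
    exact sub_eq_zero.mp (nondeg _ h0)
  -- Jordan property
  have hJ : ∀ x : A, Δ (x * x) = Δ x * x + x * Δ x := by
    intro x
    have h0 : ∀ z : A, τ ((Δ (x * x) - (Δ x * x + x * Δ x)) * z) = 0 := by
      intro z
      obtain ⟨a, hx, hz⟩ := h2loc x z
      rw [sub_mul, map_sub, keyτ' (x*x) z, hz, hx]
      have e1 : ((a*x - x*a) * x + x * (a*x - x*a)) * z = a*(x*x*z) - (x*x*a)*z := by
        noncomm_ring
      have e2 : (x*x) * (a*z - z*a) = (x*x*a)*z - (x*x*z)*a := by noncomm_ring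
      rw [e1, e2, map_sub, map_sub, htr a (x*x*z)]
      ring
    exact sub_eq_zero.mp (nondeg _ h0)
  -- polarized Jordan
  have pJ : ∀ x y : A, Δ (x*y + y*x) = Δ x * y + x * Δ y + Δ y * x + y * Δ x := by
    intro x y
    have h1 := hJ (x + y)
    rw [show (x + y) * (x + y) = x*x + (x*y + y*x) + y*y from by noncomm_ring] at h1
    rw [hadd, hadd, hJ x, hJ y, hadd x y] at h1
    have h3 : Δ (x*y + y*x)
        = ((Δ x + Δ y)*(x+y) + (x+y)*(Δ x + Δ y)) - (Δ x * x + x * Δ x) - (Δ y * y + y * Δ y) := by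
      rw [← h1]; abel
    rw [h3]; noncomm_ring
  have hyx : ∀ x y : A, Δ (y*x) = Δ x * y + x * Δ y + Δ y * x + y * Δ x - Δ (x*y) := by
    intro x y
    have h1 := pJ x y
    rw [hadd] at h1
    exact eq_sub_of_add_eq' h1
  -- D(xyx) identity
  have J2 : ∀ x y : A, Δ (x*y*x) = Δ x * (y*x) + x * Δ y * x + x*y*Δ x := by
    intro x y
    have h1 := pJ x (x*y + y*x)
    rw [show x*(x*y + y*x) + (x*y + y*x)*x = (x*x*y + y*(x*x)) + (x*y*x + x*y*x) from by
      noncomm_ring] at h1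
    rw [hadd, pJ (x*x) y, hadd, pJ x y, hJ x] at h1
    have h2 : Δ (x*y*x) + Δ (x*y*x)
        = (Δ x * (y*x) + x * Δ y * x + x*y*Δ x) + (Δ x * (y*x) + x * Δ y * x + x*y*Δ x) := by
      rw [eq_sub_of_add_eq' h1]
      noncomm_ring
    exact half_cancel _ _ h2
  -- linearized identity
  have J3 : ∀ x y z : A, Δ (x*y*z + z*y*x)
      = Δ x * (y*z) + x * Δ y * z + x*y*Δ z + Δ z * (y*x) + z * Δ y * x + z*y*Δ x := by
    intro x y z
    have h1 := J2 (x+z) y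
    rw [show (x+z)*y*(x+z) = (x*y*x + z*y*z) + (x*y*z + z*y*x) from by noncomm_ring] at h1
    rw [hadd, hadd, J2 x y, J2 z y, hadd x z] at h1
    rw [eq_sub_of_add_eq' h1]
    noncomm_ring
  -- Brešar's key identity
  have J4 : ∀ x y w : A, dd Δ x y * w * cc x y + cc x y * w * dd Δ x y = 0 := by
    intro x y w
    have h1 := J3 (x*y) w (y*x)
    rw [show (x*y)*w*(y*x) + (y*x)*w*(x*y) = x*(y*w*y)*x + y*(x*w*x)*y from by
      noncomm_ring] at h1
    rw [hadd, J2 x (y*w*y), J2 y (x*w*x), J2 y w, J2 x w, hyx x y] at h1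
    have h0 := sub_eq_zero_of_eq h1
    simp only [dd, cc]
    rw [← h0]
    noncomm_ring
  -- bilinearity of dd and cc
  have ddadd1 : ∀ x u y : A, dd Δ (x+u) y = dd Δ x y + dd Δ u y := by
    intro x u y
    simp only [dd]
    rw [show (x+u)*y = x*y + u*y from by noncomm_ring, hadd, hadd x u]
    noncomm_ring
  have ddadd2 : ∀ x y v : A, dd Δ x (y+v) = dd Δ x y + dd Δ x v := by
    intro x y v
    simp only [dd]
    rw [show x*(y+v) = x*y + x*v from by noncomm_ring, hadd, hadd y v]
    noncomm_ring
  have ccadd1 : ∀ x u y : A, cc (x+u) y = cc x y + cc u y := by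
    intro x u y; simp only [cc]; noncomm_ring
  have ccadd2 : ∀ x y v : A, cc x (y+v) = cc x y + cc x v := by
    intro x y v; simp only [cc]; noncomm_ring
  -- Lemma 1 (Brešar): in a semiprime ring, a*w*b + b*w*a = 0 forces a*w*b = 0
  have lemma1 : ∀ a b : A, (∀ w : A, a*w*b + b*w*a = 0) →
      (∀ w : A, a*w*b = 0) ∧ (∀ w : A, b*w*a = 0) := by
    intro a b hab
    have key : ∀ x y : A, b*x*(b*y*a) = 0 := by
      intro x y
      have e1 : a*(x*b*y)*b + b*(x*b*y)*a = a*x*b*(y*b) + b*x*(b*y*a) := by noncomm_ring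
      have h1 : a*x*b*(y*b) + b*x*(b*y*a) = 0 := by rw [← e1]; exact hab _
      have h2 : a*x*b = -(b*x*a) := eq_neg_of_add_eq_zero_left (hab x)
      have h3 : a*y*b = -(b*y*a) := eq_neg_of_add_eq_zero_left (hab y)
      have h4 : b*x*(b*y*a) = -(a*x*b*(y*b)) := eq_neg_of_add_eq_zero_right h1
      have h5 : a*x*b*(y*b) = -(b*x*(a*y*b)) := by rw [h2]; noncomm_ring
      have h8 : b*x*(b*y*a) = -(b*x*(b*y*a)) := by
        calc b*x*(b*y*a) = -(a*x*b*(y*b)) := h4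
          _ = -(-(b*x*(a*y*b))) := by rw [h5]
          _ = b*x*(a*y*b) := neg_neg _
          _ = -(b*x*(b*y*a)) := by rw [h3]; noncomm_ring
      exact tt0 _ (eq_neg_iff_add_eq_zero.mp h8)
    have hba0 : ∀ w : A, b*w*a = 0 := by
      intro w
      apply semiprime
      intro v
      calc (b*w*a)*v*(b*w*a) = b*(w*a*v)*(b*w*a) := by noncomm_ring
        _ = 0 := key (w*a*v) w
    refine ⟨fun w => ?_, hba0⟩
    have := eq_neg_of_add_eq_zero_left (hab w)
    rw [this, hba0 w, neg_zero]
  -- the chain of annihilation identities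
  have L5 : ∀ x y : A, (∀ w : A, dd Δ x y * w * cc x y = 0)
      ∧ (∀ w : A, cc x y * w * dd Δ x y = 0) :=
    fun x y => lemma1 _ _ (J4 x y)
  have L6' : ∀ x y u w : A, cc x y * w * dd Δ u y + cc u y * w * dd Δ x y = 0 := by
    intro x y u w
    have h1 := (L5 (x+u) y).2 w
    rw [ccadd1, ddadd1] at h1
    have h2 : (cc x y + cc u y) * w * (dd Δ x y + dd Δ u y)
        = cc x y * w * dd Δ x y
          + (cc x y * w * dd Δ u y + cc u y * w * dd Δ x y)
          + cc u y * w * dd Δ u y := by noncomm_ring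
    rw [h2, (L5 x y).2 w, (L5 u y).2 w] at h1
    simpa using h1
  have L7 : ∀ x y u w : A, dd Δ x y * w * cc u y = 0 := by
    intro x y u w
    apply semiprime
    intro v
    have e : cc u y * v * dd Δ x y = -(cc x y * v * dd Δ u y) :=
      eq_neg_of_add_eq_zero_right (L6' x y u v)
    calc (dd Δ x y * w * cc u y) * v * (dd Δ x y * w * cc u y)
        = dd Δ x y * w * (cc u y * v * dd Δ x y) * w * cc u y := by noncomm_ring
      _ = dd Δ x y * w * (-(cc x y * v * dd Δ u y)) * w * cc u y := by rw [e]
      _ = -((dd Δ x y * w * cc x y) * (v * (dd Δ u y * w * cc u y))) := by noncomm_ring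
      _ = 0 := by rw [(L5 x y).1 w]; simp
  have L7' : ∀ x y u w : A, cc u y * w * dd Δ x y = 0 := by
    intro x y u w
    apply semiprime
    intro v
    calc (cc u y * w * dd Δ x y) * v * (cc u y * w * dd Δ x y)
        = cc u y * w * ((dd Δ x y * v * cc u y) * (w * dd Δ x y)) := by noncomm_ring
      _ = 0 := by rw [L7 x y u v]; simp
  have L8' : ∀ x y u v w : A, cc u y * w * dd Δ x v + cc u v * w * dd Δ x y = 0 := by
    intro x y u v w
    have h1 := L7' x (y+v) u w
    rw [ccadd2, ddadd2] at h1
    have h2 : (cc u y + cc u v) * w * (dd Δ x y + dd Δ x v)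
        = cc u y * w * dd Δ x y
          + (cc u y * w * dd Δ x v + cc u v * w * dd Δ x y)
          + cc u v * w * dd Δ x v := by noncomm_ring
    rw [h2, L7' x y u w, L7' x v u w] at h1
    simpa using h1
  have L9 : ∀ x y u v w : A, dd Δ x y * w * cc u v = 0 := by
    intro x y u v w
    apply semiprime
    intro r
    have e : cc u v * r * dd Δ x y = -(cc u y * r * dd Δ x v) :=
      eq_neg_of_add_eq_zero_right (L8' x y u v r)
    calc (dd Δ x y * w * cc u v) * r * (dd Δ x y * w * cc u v)
        = dd Δ x y * w * (cc u v * r * dd Δ x y) * w * cc u v := by noncomm_ring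
      _ = dd Δ x y * w * (-(cc u y * r * dd Δ x v)) * w * cc u v := by rw [e]
      _ = -((dd Δ x y * w * cc u y) * (r * (dd Δ x v * w * cc u v))) := by noncomm_ring
      _ = 0 := by rw [L7 x y u w]; simp
  -- Leibniz rule
  have leib : ∀ x y : A, Δ (x * y) = Δ x * y + x * Δ y := by
    intro x y
    obtain ⟨a, hx, hy⟩ := h2loc x y
    obtain ⟨b, hxy, -⟩ := h2loc (x*y) (x*y)
    have hrep : dd Δ x y = cc (b - a) (x*y) := by
      simp only [dd, cc]
      rw [hxy, hx, hy]
      noncomm_ring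
    have hdd : dd Δ x y = 0 := by
      apply semiprime
      intro w
      have h0 := L9 x y (b-a) (x*y) w
      rw [← hrep] at h0
      exact h0
    have : Δ (x*y) - (Δ x * y + x * Δ y) = 0 := hdd
    exact sub_eq_zero.mp this
  exact ⟨hadd, hsmul, leib⟩
end

section
/- Let n be a positive natural number and let A = Matrix (Fin n) (Fin n) ℂ be the algebra of n×n complex matrices. Let Δ : A → A be a map (not assumed linear) such that for every pair x, y ∈ A there exists a ℂ-linear map D : A → A (depending on x, y) satisfying D(uv) = D(u)v + uD(v) for all u, v ∈ A, Δ(x) = D(x), and Δ(y) = D(y). Then Δ is an inner derivation: there exists a ∈ A such that Δ(x) = a·x − x·a for all x ∈ A. -/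
/-!
Tracing the Leibniz rule shows `tr (D x) = 0` for every derivation `D` of `Matrix n n R`
(idempotents and commutators span). For a 2-local derivation `Δ` this gives
`tr (Δ x * y) = -tr (x * Δ y)`, and nondegeneracy of the trace form makes `Δ` linear.
Applied to the pairs `(x, x * y)`, `(y, x * y)` and `(x, x * x)`, 2-locality confines the
Leibniz defect of two matrix units to one entry and makes it antisymmetric, which kills it.
So `Δ` is a derivation, and derivations of a full matrix algebra are inner.
-/

open Matrix

def IsTwoLocalDerivation (R : Type*) {A : Type*} [Semiring R] [Ring A] [Module R A]
    (Δ : A → A) : Prop :=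
  ∀ x y : A, ∃ D : A →ₗ[R] A, (∀ u v, D (u * v) = D u * v + u * D v) ∧ Δ x = D x ∧ Δ y = D y

section Ring

variable {R A : Type*} [Ring A]

def leibnizDefect (Δ : A → A) (x y : A) : A :=
  Δ (x * y) - Δ x * y - x * Δ y

lemma leibnizDefect_add_add {Δ : A → A} (hadd : ∀ x y, Δ (x + y) = Δ x + Δ y) (x y : A) :
    leibnizDefect Δ (x + y) (x + y) =
      leibnizDefect Δ x x + leibnizDefect Δ x y + leibnizDefect Δ y x + leibnizDefect Δ y y := by
  simp only [leibnizDefect, add_mul, mul_add, hadd]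
  abel

lemma leibnizDefect_swap {Δ : A → A} (hadd : ∀ x y, Δ (x + y) = Δ x + Δ y)
    (hjordan : ∀ x, leibnizDefect Δ x x = 0) (x y : A) :
    leibnizDefect Δ x y = -leibnizDefect Δ y x := by
  have h := leibnizDefect_add_add hadd x y
  rw [hjordan, hjordan, hjordan, zero_add, add_zero] at h
  exact eq_neg_of_add_eq_zero_left h.symm

namespace IsTwoLocalDerivation

variable [Semiring R] [Module R A] {Δ : A → A} (hΔ : IsTwoLocalDerivation R Δ)
include hΔ

lemma leibnizDefect_self (x : A) : leibnizDefect Δ x x = 0 := by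
  obtain ⟨D, hD, hx, hxx⟩ := hΔ x (x * x)
  rw [leibnizDefect, hxx, hD, hx, sub_sub, sub_self]

lemma exists_leibnizDefect_eq_mul_left (x y : A) : ∃ m, leibnizDefect Δ x y = x * m := by
  obtain ⟨D, hD, hx, hxy⟩ := hΔ x (x * y)
  exact ⟨D y - Δ y, by rw [leibnizDefect, hxy, hD, hx, mul_sub]; abel⟩

lemma exists_leibnizDefect_eq_mul_right (x y : A) : ∃ m, leibnizDefect Δ x y = m * y := by
  obtain ⟨D, hD, hy, hxy⟩ := hΔ y (x * y)
  exact ⟨D x - Δ x, by rw [leibnizDefect, hxy, hD, hy, sub_mul]; abel⟩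

end IsTwoLocalDerivation

end Ring

namespace Matrix

variable {m n R M : Type*} [Fintype n] [DecidableEq n] [CommRing R]

lemma linearMap_ext_single [Fintype m] [DecidableEq m] [AddCommMonoid M] [Module R M]
    {f g : Matrix m n R →ₗ[R] M} (h : ∀ i j, f (single i j 1) = g (single i j 1)) : f = g :=
  ext_linearMap R fun i j => LinearMap.ext_ring (h i j)

section Derivation

variable (D : Matrix n n R →ₗ[R] Matrix n n R) (hD : ∀ u v, D (u * v) = D u * v + u * D v)
include hD

lemma trace_derivation_apply_of_isIdempotentElem {e : Matrix n n R} (he : IsIdempotentElem e) :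
    (D e).trace = 0 := by
  rw [IsIdempotentElem] at he
  have hDe : D e = D e * e + e * D e := by rw [← hD, he]
  have hcorner : e * D e * e = 0 := by
    have h := congrArg (fun m => e * m * e) hDe
    simp only [mul_add, add_mul, ← mul_assoc, he] at h
    rw [mul_assoc (e * D e), he] at h
    exact left_eq_add.mp h
  have hcross : (e * D e).trace = 0 := by
    calc (e * D e).trace = (e * (e * D e)).trace := by rw [← mul_assoc, he]
      _ = (e * D e * e).trace := trace_mul_comm _ _
      _ = 0 := by rw [hcorner, trace_zero]
  rw [hDe, trace_add, trace_mul_comm, hcross, add_zero]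

omit [DecidableEq n] in
lemma trace_derivation_apply_commutator (x y : Matrix n n R) :
    (D (x * y - y * x)).trace = 0 := by
  rw [map_sub, hD, hD, trace_sub, trace_add, trace_add, trace_mul_comm (D x) y,
    trace_mul_comm x (D y)]
  ring

lemma trace_derivation_apply (x : Matrix n n R) : (D x).trace = 0 := by
  suffices traceLinearMap n R R ∘ₗ D = 0 from LinearMap.congr_fun this x
  refine linearMap_ext_single fun i j => ?_
  rw [LinearMap.comp_apply, traceLinearMap_apply, LinearMap.zero_apply]
  obtain rfl | hij := eq_or_ne i j
  · exact trace_derivation_apply_of_isIdempotentElem D hD (by simp [IsIdempotentElem])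
  · have hcomm :
        single i j (1 : R) = single i i 1 * single i j 1 - single i j 1 * single i i 1 := by
      rw [single_mul_single_same, single_mul_single_of_ne (h := hij.symm), mul_one, sub_zero]
    rw [hcomm]
    exact trace_derivation_apply_commutator D hD _ _

lemma mul_sum_derivation_mul_single (i₀ : n) (x : Matrix n n R) :
    x * ∑ k, D (single k i₀ 1) * single i₀ k 1 =
      ∑ k, D (x * single k i₀ 1) * single i₀ k 1 - D x := by
  simp only [Finset.mul_sum, ← mul_assoc, hD, add_mul, Finset.sum_add_distrib]
  simp only [mul_assoc (D x), single_mul_single_same, mul_one, ← Finset.mul_sum, sum_single_one]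
  abel

theorem exists_eq_mul_sub_mul_of_derivation : ∃ a, ∀ x, D x = a * x - x * a := by
  obtain _ | ⟨⟨i₀⟩⟩ := isEmpty_or_nonempty n
  · exact ⟨0, fun x => Subsingleton.elim _ _⟩
  set a := ∑ k, D (single k i₀ 1) * single i₀ k 1
  suffices D = LinearMap.mulLeft R a - LinearMap.mulRight R a from
    ⟨a, fun x => LinearMap.congr_fun this x⟩
  refine linearMap_ext_single fun i j => ?_
  have hleft : a * single i j 1 = D (single i i₀ 1) * single i₀ j 1 := by
    rw [Finset.sum_mul, Finset.sum_eq_single i]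
    · rw [mul_assoc, single_mul_single_same, mul_one]
    · intro k _ hk
      rw [mul_assoc, single_mul_single_of_ne (h := hk), mul_zero]
    · exact absurd (Finset.mem_univ i)
  have hright : single i j 1 * a = D (single i i₀ 1) * single i₀ j 1 - D (single i j 1) := by
    rw [mul_sum_derivation_mul_single D hD, Finset.sum_eq_single j]
    · rw [single_mul_single_same, mul_one]
    · intro k _ hk
      rw [single_mul_single_of_ne (h := Ne.symm hk), map_zero, zero_mul]
    · exact absurd (Finset.mem_univ j)
  rw [LinearMap.sub_apply, LinearMap.mulLeft_apply, LinearMap.mulRight_apply, hleft, hright,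
    sub_sub_cancel]

end Derivation

end Matrix

namespace IsTwoLocalDerivation

variable {n R : Type*} [Fintype n] [DecidableEq n] [CommRing R]
  {Δ : Matrix n n R → Matrix n n R} (hΔ : IsTwoLocalDerivation R Δ)
include hΔ

lemma trace_map_mul (x y : Matrix n n R) : (Δ x * y).trace = -(x * Δ y).trace := by
  obtain ⟨D, hD, hx, hy⟩ := hΔ x y
  have h := trace_derivation_apply D hD (x * y)
  rw [hD, trace_add] at h
  rw [hx, hy, eq_neg_iff_add_eq_zero, h]

lemma map_add (x y : Matrix n n R) : Δ (x + y) = Δ x + Δ y :=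
  ext_iff_trace_mul_right.mpr fun z => by
    rw [add_mul, trace_add, hΔ.trace_map_mul, hΔ.trace_map_mul, hΔ.trace_map_mul, add_mul,
      trace_add, neg_add]

lemma map_smul (c : R) (x : Matrix n n R) : Δ (c • x) = c • Δ x :=
  ext_iff_trace_mul_right.mpr fun z => by
    rw [hΔ.trace_map_mul, smul_mul_assoc, trace_smul, smul_mul_assoc, trace_smul,
      hΔ.trace_map_mul, smul_neg]

def toLinearMap : Matrix n n R →ₗ[R] Matrix n n R where
  toFun := Δ
  map_add' := hΔ.map_add
  map_smul' := hΔ.map_smul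

lemma leibnizDefect_single_single (i j k l : n) :
    leibnizDefect Δ (single i j (1 : R)) (single k l 1) = 0 := by
  by_cases hsame : i = k ∧ j = l
  · obtain ⟨rfl, rfl⟩ := hsame
    exact hΔ.leibnizDefect_self _
  -- The defect of `(Eᵢⱼ, Eₖₗ)` lies in `Eᵢⱼ A ∩ A Eₖₗ`, so only its entry `(i, l)` can be nonzero;
  -- antisymmetry moves that entry to the defect of `(Eₖₗ, Eᵢⱼ)`, which lives at `(k, j)`.
  have hrow : ∀ {i j k l : n} p q, p ≠ i →
      leibnizDefect Δ (single i j (1 : R)) (single k l 1) p q = 0 := by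
    intro i j k l p q hp
    obtain ⟨m, hm⟩ := hΔ.exists_leibnizDefect_eq_mul_left (single i j 1) (single k l 1)
    rw [hm]
    exact single_mul_apply_of_ne _ _ _ _ _ hp _
  have hcol : ∀ {i j k l : n} p q, q ≠ l →
      leibnizDefect Δ (single i j (1 : R)) (single k l 1) p q = 0 := by
    intro i j k l p q hq
    obtain ⟨m, hm⟩ := hΔ.exists_leibnizDefect_eq_mul_right (single i j 1) (single k l 1)
    rw [hm]
    exact mul_single_apply_of_ne _ _ _ _ _ hq _
  ext p q
  rw [Matrix.zero_apply]
  obtain hp | rfl := ne_or_eq p i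
  · exact hrow p q hp
  obtain hq | rfl := ne_or_eq q l
  · exact hcol p q hq
  rw [leibnizDefect_swap hΔ.map_add hΔ.leibnizDefect_self, neg_apply, neg_eq_zero]
  obtain hpk | rfl := ne_or_eq p k
  · exact hrow p q hpk
  · exact hcol p q fun hqj => hsame ⟨rfl, hqj.symm⟩

lemma map_mul (x y : Matrix n n R) : Δ (x * y) = Δ x * y + x * Δ y := by
  let μ := LinearMap.mul R (Matrix n n R)
  let L := hΔ.toLinearMap
  let B := μ.compr₂ L - μ.compl₁₂ L LinearMap.id - μ.compl₁₂ LinearMap.id L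
  have hB : B = 0 := linearMap_ext_single fun i j => linearMap_ext_single fun k l =>
    hΔ.leibnizDefect_single_single i j k l
  have h : leibnizDefect Δ x y = 0 := LinearMap.congr_fun₂ hB x y
  rwa [leibnizDefect, sub_sub, sub_eq_zero] at h

end IsTwoLocalDerivation

theorem stmt_10_general
    (n : ℕ)
    (Δ : Matrix (Fin n) (Fin n) ℂ → Matrix (Fin n) (Fin n) ℂ)
    (h2loc : ∀ x y : Matrix (Fin n) (Fin n) ℂ,
      ∃ D : Matrix (Fin n) (Fin n) ℂ →ₗ[ℂ] Matrix (Fin n) (Fin n) ℂ,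
        (∀ u v : Matrix (Fin n) (Fin n) ℂ, D (u * v) = D u * v + u * D v) ∧
        Δ x = D x ∧ Δ y = D y) :
    ∃ a : Matrix (Fin n) (Fin n) ℂ,
      ∀ x : Matrix (Fin n) (Fin n) ℂ, Δ x = a * x - x * a := by
  have hΔ : IsTwoLocalDerivation ℂ Δ := h2loc
  exact exists_eq_mul_sub_mul_of_derivation hΔ.toLinearMap hΔ.map_mul

/-- Matrix-algebra instance of Theorem 3.4: every 2-local derivation on
`M_n(ℂ)` is an inner derivation. -/
theorem stmt_10
    (n : ℕ) (hn : 0 < n)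
    (Δ : Matrix (Fin n) (Fin n) ℂ → Matrix (Fin n) (Fin n) ℂ)
    (h2loc : ∀ x y : Matrix (Fin n) (Fin n) ℂ,
      ∃ D : Matrix (Fin n) (Fin n) ℂ →ₗ[ℂ] Matrix (Fin n) (Fin n) ℂ,
        (∀ u v : Matrix (Fin n) (Fin n) ℂ, D (u * v) = D u * v + u * D v) ∧
        Δ x = D x ∧ Δ y = D y) :
    ∃ a : Matrix (Fin n) (Fin n) ℂ,
      ∀ x : Matrix (Fin n) (Fin n) ℂ, Δ x = a * x - x * a :=
  stmt_10_general n Δ h2loc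
end
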